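/- The matrix-valued function P^∞ is holomorphic on ℂ∖([−1,1] ∪ {−iy : y ≥ 0}); in particular, for every z in this set one has (z−1)/(z+1) ∉ (−∞,0], D(z) ∉ (−∞,0], (−i+r(z))/z ∉ (−∞,0], and z + r(z) ∉ {−iy : y ≥ 0}, so that all the logarithms occurring in the definition of P^∞ are holomorphic at z. -/

import Mathlib

open Complex Filter Set Topology Matrix

/-- Principal branch of √(z²−1), holomorphic on ℂ∖[−1,1]. -/
noncomputable def rr (z : ℂ) : ℂ :=
  Complex.exp ((1 / 2 : ℂ) * Complex.log (z - 1)) *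
    Complex.exp ((1 / 2 : ℂ) * Complex.log (z + 1))

/-- D(z) = z/(1 + i√(z²−1)). -/
noncomputable def DD (z : ℂ) : ℂ := z / (1 + Complex.I * rr z)

/-- u^{σ₃} = diag(u, u⁻¹). -/
noncomputable def dS (u : ℂ) : Matrix (Fin 2) (Fin 2) ℂ := !![u, 0; 0, u⁻¹]

/-- Logarithm with branch cut along the negative imaginary axis:
ℒ(w) = Log(−i·w) + iπ/2, with argument in (−π/2, 3π/2]. -/
noncomputable def Lneg (w : ℂ) : ℂ :=
  Complex.log (-Complex.I * w) + Complex.I * (Real.pi : ℂ) / 2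

/-- The global parametrix P^∞(z). -/
noncomputable def Pinf (α μ : ℝ) (β : ℂ) (z : ℂ) : Matrix (Fin 2) (Fin 2) ℂ :=
  dS (Complex.exp (β * (Real.log 2 : ℂ))) *
  dS (Complex.exp (((Real.pi : ℂ) * Complex.I / 2) * ((μ : ℂ) - β))) *
  (((1 : ℂ) / (Real.sqrt 2 : ℂ)) • !![(1 : ℂ), -Complex.I; -Complex.I, 1]) *
  dS (Complex.exp ((1 / 4 : ℂ) * (Complex.log (z - 1) - Complex.log (z + 1)))) *
  (((1 : ℂ) / (Real.sqrt 2 : ℂ)) • !![(1 : ℂ), Complex.I; Complex.I, 1]) *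
  dS (Complex.exp (-β * Lneg (z + rr z))) *
  dS (Complex.exp (((Real.pi : ℂ) * Complex.I / 2) * β)) *
  dS (Complex.exp ((α : ℂ) * Complex.log ((-Complex.I + rr z) / z))) *
  dS (Complex.exp ((μ : ℂ) * Complex.log (DD z)))

/-- The domain ℂ∖([−1,1] ∪ {−iy : y ≥ 0}). -/
def SS : Set ℂ :=
  {z : ℂ | (¬∃ x : ℝ, x ∈ Set.Icc (-1 : ℝ) 1 ∧ z = (x : ℂ)) ∧
           (¬∃ y : ℝ, 0 ≤ y ∧ z = -(y : ℂ) * Complex.I)}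

/-- The negative real cut (−∞,0] ⊂ ℂ. -/
def negCut : Set ℂ := {u : ℂ | u.im = 0 ∧ u.re ≤ 0}

/-!
If one of the four quantities lay on its cut, eliminating `rr z` by `rr z ^ 2 = z ^ 2 - 1`
would put `z` on `[-1, 1]`, which is excluded, or on the imaginary axis, where `z ∈ SS` forces
`Im z > 0` and then `rr z = i √(1 + (Im z)²)` has the wrong sign. Holomorphy of `rr` off
`[-1, 1]` comes from `rr z = (z + 1) exp(½ Log((z - 1)/(z + 1)))`, whose logarithm is evaluated
off `(-∞, 0]`; with all four points off their cuts, each entry of `Pinf` is a sum of products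
of holomorphic functions.
-/

open scoped Real ComplexConjugate

lemma notMem_negCut_iff {u : ℂ} : u ∉ negCut ↔ u ∈ slitPlane := by
  rw [mem_slitPlane_iff]
  simp only [negCut, mem_ofPred_eq, not_and_or, not_le]
  tauto

lemma exists_ofReal_of_mem_negCut {u : ℂ} (h : u ∈ negCut) : ∃ t : ℝ, t ≤ 0 ∧ u = t :=
  ⟨u.re, h.2, Complex.ext rfl (by simp [h.1])⟩

lemma ofReal_notMem_SS {x : ℝ} (hx : x ∈ Icc (-1) 1) : (x : ℂ) ∉ SS :=
  fun hz => hz.1 ⟨x, hx, rfl⟩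

lemma log_div_of_arg_sub_mem_Ioc {a b : ℂ} (ha : a ≠ 0) (hb : b ≠ 0)
    (h : arg a - arg b ∈ Ioc (-π) π) : log (a / b) = log a - log b := by
  have harg : arg (a / b) = arg a - arg b := by
    have h' := arg_div_coe_angle ha hb
    rw [← Real.Angle.coe_sub] at h'
    rw [arg_coe_angle_eq_iff_eq_toReal.mp h', Real.Angle.toReal_coe_eq_self_iff_mem_Ioc.mpr h]
  apply Complex.ext
  · simp only [sub_re, log_re, norm_div]
    exact Real.log_div (norm_ne_zero_iff.mpr ha) (norm_ne_zero_iff.mpr hb)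
  · simp only [sub_im, log_im, harg]

lemma arg_sub_one_sub_arg_add_one_mem_Ioc (z : ℂ) :
    arg (z - 1) - arg (z + 1) ∈ Ioc (-π) π := by
  have h1 := neg_pi_lt_arg (z - 1)
  have h2 := neg_pi_lt_arg (z + 1)
  have h3 := arg_le_pi (z - 1)
  have h4 := arg_le_pi (z + 1)
  rcases lt_or_ge z.im 0 with him | him
  · have h5 : arg (z - 1) < 0 := arg_neg_iff.mpr (by simpa using him)
    have h6 : arg (z + 1) < 0 := arg_neg_iff.mpr (by simpa using him)
    constructor <;> linarith
  · have h5 : 0 ≤ arg (z - 1) := arg_nonneg_iff.mpr (by simpa using him)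
    have h6 : 0 ≤ arg (z + 1) := arg_nonneg_iff.mpr (by simpa using him)
    refine ⟨lt_of_le_of_ne (by linarith) fun h => ?_, by linarith⟩
    -- `arg (z - 1) = 0` and `arg (z + 1) = π` would put `z` both right of `1` and left of `-1`
    have hre₁ := (arg_eq_zero_iff.mp (show arg (z - 1) = 0 by linarith)).1
    have hre₂ := (arg_eq_pi_iff.mp (show arg (z + 1) = π by linarith)).1
    simp only [sub_re, add_re, one_re] at hre₁ hre₂
    linarith

lemma log_sub_one_sub_log_add_one {z : ℂ} (h1 : z - 1 ≠ 0) (h2 : z + 1 ≠ 0) :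
    log (z - 1) - log (z + 1) = log ((z - 1) / (z + 1)) :=
  (log_div_of_arg_sub_mem_Ioc h1 h2 (arg_sub_one_sub_arg_add_one_mem_Ioc z)).symm

lemma neg_I_mul_mem_slitPlane {w : ℂ} (h : ¬∃ y : ℝ, 0 ≤ y ∧ w = -(y : ℂ) * I) :
    -I * w ∈ slitPlane := by
  by_contra hc
  rw [mem_slitPlane_iff] at hc
  push Not at hc
  simp only [neg_mul, neg_re, mul_re, I_re, zero_mul, I_im, one_mul, zero_sub, neg_neg, neg_im,
    mul_im, zero_add, neg_eq_zero] at hc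
  exact h ⟨-w.im, by linarith, Complex.ext (by simp [hc.2]) (by simp)⟩

section MatrixEntries
variable {ι : Type*} [Fintype ι] {s : Set ℂ}

lemma differentiableOn_mul_apply {M N : ℂ → Matrix ι ι ℂ}
    (hM : ∀ i j, DifferentiableOn ℂ (fun z => M z i j) s)
    (hN : ∀ i j, DifferentiableOn ℂ (fun z => N z i j) s) :
    ∀ i j, DifferentiableOn ℂ (fun z => (M z * N z) i j) s := fun i j => by
  simp only [Matrix.mul_apply]
  exact DifferentiableOn.fun_sum fun k _ => (hM i k).mul (hN k j)

lemma differentiableOn_dS_apply {f : ℂ → ℂ} (hf : DifferentiableOn ℂ f s)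
    (hf₀ : ∀ z ∈ s, f z ≠ 0) : ∀ i j, DifferentiableOn ℂ (fun z => dS (f z) i j) s := by
  intro i j
  fin_cases i <;> fin_cases j <;>
    simp only [dS, Fin.zero_eta, Fin.mk_one, Fin.isValue, of_apply, cons_val', cons_val_zero,
      cons_val_one, cons_val_fin_one, differentiableOn_const]
  exacts [hf, hf.inv hf₀]

end MatrixEntries

section SS
variable {z : ℂ} (hz : z ∈ SS)
include hz

lemma ne_zero_of_mem_SS : z ≠ 0 := by
  rintro rfl
  exact ofReal_notMem_SS (x := 0) (by norm_num) (by simpa using hz)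

lemma sub_one_ne_zero_of_mem_SS : z - 1 ≠ 0 := by
  rw [sub_ne_zero]
  rintro rfl
  exact ofReal_notMem_SS (x := 1) (by norm_num) (by simpa using hz)

lemma add_one_ne_zero_of_mem_SS : z + 1 ≠ 0 := by
  intro h
  obtain rfl := eq_neg_of_add_eq_zero_left h
  exact ofReal_notMem_SS (x := -1) (by norm_num) (by simpa using hz)

lemma im_pos_of_mem_SS_of_re_eq_zero (hre : z.re = 0) : 0 < z.im := by
  by_contra! h
  exact hz.2 ⟨-z.im, by linarith, Complex.ext (by simp [hre]) (by simp)⟩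

end SS

lemma rr_sq {z : ℂ} (h1 : z - 1 ≠ 0) (h2 : z + 1 ≠ 0) : rr z ^ 2 = z ^ 2 - 1 := by
  have exp_half_log_sq (w : ℂ) (hw : w ≠ 0) : exp ((1 / 2 : ℂ) * log w) ^ 2 = w := by
    rw [← exp_nat_mul, ← mul_assoc]
    norm_num
    exact exp_log hw
  rw [rr, mul_pow, exp_half_log_sq _ h1, exp_half_log_sq _ h2]
  ring

lemma rr_eq_mul_exp_half_log_div {z : ℂ} (h1 : z - 1 ≠ 0) (h2 : z + 1 ≠ 0) :
    rr z = (z + 1) * exp ((1 / 2 : ℂ) * log ((z - 1) / (z + 1))) := by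
  calc rr z = exp (log (z + 1)) * exp ((1 / 2 : ℂ) * (log (z - 1) - log (z + 1))) := by
        rw [rr, ← exp_add, ← exp_add]
        ring_nf
    _ = _ := by
        rw [exp_log h2, log_sub_one_sub_log_add_one h1 h2]

section ImaginaryAxis
variable {z : ℂ} (hre : z.re = 0) (him : 0 < z.im)
include hre him

lemma rr_im_pos : 0 < (rr z).im := by
  have hnorm : ‖z - 1‖ = ‖z + 1‖ := by
    rw [show z - 1 = -conj (z + 1) by apply Complex.ext <;> simp [hre], norm_neg, Complex.norm_conj]
  have harg : arg (z - 1) + arg (z + 1) = π := by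
    rw [arg_of_re_neg_of_im_nonneg (by simp [hre]) (by simp; linarith),
      arg_of_re_nonneg (by simp [hre]), hnorm]
    simp [neg_div, Real.arcsin_neg]
  rw [rr, ← exp_add, exp_im]
  have him : ((1 / 2 : ℂ) * log (z - 1) + (1 / 2 : ℂ) * log (z + 1)).im = π / 2 := by
    simp only [add_im, mul_im, log_im, log_re]
    norm_num
    linarith
  rw [him, Real.sin_pi_div_two, mul_one]
  exact Real.exp_pos _

lemma rr_eq_I_mul_sqrt : rr z = I * √(1 + z.im ^ 2) := by
  have hz : z = I * z.im := Complex.ext (by simp [hre]) (by simp)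
  have hsq := rr_sq (z := z) (fun h => by simpa [hre] using congrArg re h)
    (fun h => by simpa [hre] using congrArg re h)
  have hs : ((√(1 + z.im ^ 2) : ℝ) : ℂ) ^ 2 = 1 + (z.im : ℂ) ^ 2 := by
    rw [← ofReal_pow, Real.sq_sqrt (by positivity)]
    push_cast
    ring
  have hprod : (rr z - I * √(1 + z.im ^ 2)) * (rr z + I * √(1 + z.im ^ 2)) = 0 := by
    linear_combination hsq + (z + I * z.im) * hz - I ^ 2 * hs - I_sq
  rcases mul_eq_zero.mp hprod with h | h
  · exact sub_eq_zero.mp h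
  · have := rr_im_pos hre him
    rw [eq_neg_of_add_eq_zero_left h] at this
    simp only [neg_im, mul_im, I_re, ofReal_im, mul_zero, I_im, ofReal_re, one_mul, zero_add,
      Left.neg_pos_iff] at this
    linarith [Real.sqrt_nonneg (1 + z.im ^ 2)]

end ImaginaryAxis

section Cuts
variable {z : ℂ} (hz : z ∈ SS)
include hz

lemma sub_one_div_add_one_notMem_negCut : (z - 1) / (z + 1) ∉ negCut := by
  intro h
  obtain ⟨t, ht, heq⟩ := exists_ofReal_of_mem_negCut h
  rw [div_eq_iff (add_one_ne_zero_of_mem_SS hz)] at heq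
  have hz' : z = ((1 + t) / (1 - t) : ℝ) := by
    have : (1 - t : ℂ) ≠ 0 := by exact_mod_cast (by linarith : (1 : ℝ) - t ≠ 0)
    push_cast
    field_simp
    linear_combination heq
  refine ofReal_notMem_SS ⟨?_, ?_⟩ (hz' ▸ hz)
  · rw [le_div_iff₀ (by linarith)]
    linarith
  · rw [div_le_one (by linarith)]
    linarith

lemma one_add_I_mul_rr_ne_zero : 1 + I * rr z ≠ 0 := by
  intro h
  have hsq := rr_sq (sub_one_ne_zero_of_mem_SS hz) (add_one_ne_zero_of_mem_SS hz)
  have : z ^ 2 = 0 := by linear_combination (1 - I * rr z) * h - hsq + rr z ^ 2 * I_sq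
  exact ne_zero_of_mem_SS hz (pow_eq_zero_iff two_ne_zero |>.mp this)

lemma DD_im_ne_zero : (DD z).im ≠ 0 := by
  intro him
  set t := (DD z).re
  have hDD : DD z = t := Complex.ext rfl (by simp [him])
  have hzt : z = t * (1 + I * rr z) := by
    rw [← hDD, DD, div_mul_cancel₀ _ (one_add_I_mul_rr_ne_zero hz)]
  have hsq := rr_sq (sub_one_ne_zero_of_mem_SS hz) (add_one_ne_zero_of_mem_SS hz)
  have hquad : z * ((1 + t ^ 2) * z - 2 * t) = 0 := by
    linear_combination (z - t + t * I * rr z) * hzt - t ^ 2 * hsq + (t * rr z) ^ 2 * I_sq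
  have hz' : z = (2 * t / (1 + t ^ 2) : ℝ) := by
    have : (1 + t ^ 2 : ℂ) ≠ 0 := by exact_mod_cast (by positivity : (1 : ℝ) + t ^ 2 ≠ 0)
    push_cast
    field_simp
    linear_combination (mul_eq_zero.mp hquad).resolve_left (ne_zero_of_mem_SS hz)
  refine ofReal_notMem_SS ⟨?_, ?_⟩ (hz' ▸ hz)
  · rw [le_div_iff₀ (by positivity)]
    nlinarith [sq_nonneg (t + 1)]
  · rw [div_le_one (by positivity)]
    nlinarith [sq_nonneg (t - 1)]

lemma neg_I_add_rr_div_notMem_negCut : (-I + rr z) / z ∉ negCut := by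
  intro h
  obtain ⟨t, ht, heq⟩ := exists_ofReal_of_mem_negCut h
  rw [div_eq_iff (ne_zero_of_mem_SS hz)] at heq
  have hsq := rr_sq (sub_one_ne_zero_of_mem_SS hz) (add_one_ne_zero_of_mem_SS hz)
  have hlin : ((1 - t ^ 2 : ℝ) : ℂ) * z = 2 * I * t := by
    have : z * ((1 - t ^ 2) * z - 2 * I * t) = 0 := by
      linear_combination (rr z + I + t * z) * heq - hsq + I_sq
    push_cast
    exact sub_eq_zero.mp ((mul_eq_zero.mp this).resolve_left (ne_zero_of_mem_SS hz))
  have hre : z.re = 0 := by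
    have hre' := congrArg re hlin
    have him' := congrArg im hlin
    simp only [mul_re, ofReal_re, ofReal_im, zero_mul, sub_zero, re_ofNat, I_re, mul_zero,
      im_ofNat, I_im, mul_one, sub_self, mul_im, add_zero, mul_eq_zero, zero_add] at hre' him'
    refine hre'.resolve_left fun ht1 => ?_
    rw [ht1, zero_mul] at him'
    have ht0 : t = 0 := by linarith
    simp [ht0] at ht1
  have him := im_pos_of_mem_SS_of_re_eq_zero hz hre
  have hsqrt := congrArg im heq
  rw [rr_eq_I_mul_sqrt hre him] at hsqrt
  simp only [add_im, neg_im, I_im, mul_im, I_re, ofReal_im, mul_zero, ofReal_re, one_mul,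
    zero_add, hre, add_zero] at hsqrt
  have : 1 < √(1 + z.im ^ 2) := by
    rw [Real.lt_sqrt zero_le_one]
    nlinarith
  nlinarith

lemma add_rr_ne_neg_ofReal_mul_I : ¬∃ y : ℝ, 0 ≤ y ∧ z + rr z = -(y : ℂ) * I := by
  rintro ⟨y, hy, heq⟩
  have hsq := rr_sq (sub_one_ne_zero_of_mem_SS hz) (add_one_ne_zero_of_mem_SS hz)
  have hlin : 2 * y * I * z = ((y ^ 2 - 1 : ℝ) : ℂ) := by
    push_cast
    linear_combination -(rr z - y * I - z) * heq + hsq - y ^ 2 * I_sq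
  have hre' := congrArg re hlin
  have him' := congrArg im hlin
  simp only [mul_re, re_ofNat, ofReal_re, im_ofNat, ofReal_im, mul_zero, sub_zero, I_re, mul_im,
    zero_mul, add_zero, I_im, mul_one, sub_self, zero_sub, zero_add, mul_eq_zero,
    OfNat.ofNat_ne_zero, false_or] at hre' him'
  have hre : z.re = 0 := him'.resolve_left (by rintro rfl; norm_num at hre')
  have him := im_pos_of_mem_SS_of_re_eq_zero hz hre
  have hsum := congrArg im heq
  rw [add_im, rr_eq_I_mul_sqrt hre him] at hsum
  simp only [mul_im, I_re, ofReal_im, mul_zero, I_im, ofReal_re, one_mul, zero_add, neg_mul,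
    neg_im, mul_one, add_zero] at hsum
  nlinarith [Real.sqrt_nonneg (1 + z.im ^ 2)]

end Cuts

lemma differentiableOn_log_sub_one_div_add_one :
    DifferentiableOn ℂ (fun z => log ((z - 1) / (z + 1))) SS :=
  ((differentiableOn_id.sub_const 1).div (differentiableOn_id.add_const 1)
    fun _ hz => add_one_ne_zero_of_mem_SS hz).clog
    fun _ hz => notMem_negCut_iff.mp (sub_one_div_add_one_notMem_negCut hz)

lemma differentiableOn_rr : DifferentiableOn ℂ rr SS :=
  ((differentiableOn_id.add_const 1).mul
    (differentiableOn_log_sub_one_div_add_one.const_mul _).cexp).congr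
    fun _ hz =>
      rr_eq_mul_exp_half_log_div (sub_one_ne_zero_of_mem_SS hz) (add_one_ne_zero_of_mem_SS hz)

lemma differentiableOn_Lneg_add_rr : DifferentiableOn ℂ (fun z => Lneg (z + rr z)) SS :=
  (((differentiableOn_id.add differentiableOn_rr).const_mul _).clog
    fun _ hz => neg_I_mul_mem_slitPlane (add_rr_ne_neg_ofReal_mul_I hz)).add_const _

lemma differentiableOn_log_neg_I_add_rr_div :
    DifferentiableOn ℂ (fun z => log ((-I + rr z) / z)) SS :=
  (((differentiableOn_const _).add differentiableOn_rr).div differentiableOn_id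
    fun _ hz => ne_zero_of_mem_SS hz).clog
    fun _ hz => notMem_negCut_iff.mp (neg_I_add_rr_div_notMem_negCut hz)

lemma differentiableOn_log_DD : DifferentiableOn ℂ (fun z => log (DD z)) SS :=
  (differentiableOn_id.div ((differentiableOn_const _).add (differentiableOn_rr.const_mul _))
    fun _ hz => one_add_I_mul_rr_ne_zero hz).clog
    fun _ hz => mem_slitPlane_iff.mpr (Or.inr (DD_im_ne_zero hz))

theorem stmt11_general (α μ : ℝ) (β : ℂ) :
    (∀ z ∈ SS,
      (z - 1) / (z + 1) ∉ negCut ∧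
      DD z ∉ negCut ∧
      (-Complex.I + rr z) / z ∉ negCut ∧
      ¬∃ y : ℝ, 0 ≤ y ∧ z + rr z = -(y : ℂ) * Complex.I) ∧
    (∀ i j : Fin 2, DifferentiableOn ℂ (fun z => Pinf α μ β z i j) SS) := by
  refine ⟨fun z hz => ⟨sub_one_div_add_one_notMem_negCut hz, fun h => DD_im_ne_zero hz h.1,
    neg_I_add_rr_div_notMem_negCut hz, add_rr_ne_neg_ofReal_mul_I hz⟩, ?_⟩
  have hquarter : DifferentiableOn ℂ
      (fun z => (1 / 4 : ℂ) * (log (z - 1) - log (z + 1))) SS :=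
    (differentiableOn_log_sub_one_div_add_one.const_mul _).congr fun _ hz => by
      rw [log_sub_one_sub_log_add_one (sub_one_ne_zero_of_mem_SS hz)
        (add_one_ne_zero_of_mem_SS hz)]
  have hconst (M : Matrix (Fin 2) (Fin 2) ℂ) : ∀ i j, DifferentiableOn ℂ (fun _ => M i j) SS :=
    fun _ _ => differentiableOn_const _
  have hexp {g : ℂ → ℂ} (hg : DifferentiableOn ℂ g SS) :=
    differentiableOn_dS_apply hg.cexp fun _ _ => exp_ne_zero _
  have hmul := @differentiableOn_mul_apply (Fin 2) _ SS
  exact hmul (hmul (hmul (hmul (hmul (hmul (hmul (hmul (hconst _) (hconst _)) (hconst _))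
    (hexp hquarter)) (hconst _)) (hexp (differentiableOn_Lneg_add_rr.const_mul (-β))))
    (hconst _)) (hexp (differentiableOn_log_neg_I_add_rr_div.const_mul (α : ℂ))))
    (hexp (differentiableOn_log_DD.const_mul (μ : ℂ)))

theorem stmt11 (α μ : ℝ) (β : ℂ) (hα : -(1 / 2) < α) (hβ : β.re = 0) :
    (∀ z ∈ SS,
      (z - 1) / (z + 1) ∉ negCut ∧
      DD z ∉ negCut ∧
      (-Complex.I + rr z) / z ∉ negCut ∧
      ¬∃ y : ℝ, 0 ≤ y ∧ z + rr z = -(y : ℂ) * Complex.I) ∧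
    (∀ i j : Fin 2, DifferentiableOn ℂ (fun z => Pinf α μ β z i j) SS) :=
  stmt11_general α μ β
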